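/- Let $\Psi$ be an Orlicz function such that the Hoffmann-Jørgensen inequality $\|\sum_{i=1}^N X_i\|_\Psi\le D(\|\sum_{i=1}^N X_i\|_1+\|\max_{i\le N}|X_i|\|_\Psi)$ holds with a fixed constant $D$ for all sequences of i.i.d., symmetric, real-valued, bounded random variables. Then $\Psi$ satisfies the condition (HJ): there exists $K>0$ such that $\psi(su)\le K(s\ln(1+s)+s\psi(u))$ for all $s,u\ge K$, where $\psi=\log(1+\Psi)$. -/

import Mathlib

open MeasureTheory ProbabilityTheory

/-- An Orlicz function: convex, strictly increasing on `[0,∞)`, vanishing at `0`. -/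
def IsOrlicz (Ψ : ℝ → ℝ) : Prop :=
  ConvexOn ℝ (Set.Ici 0) Ψ ∧ StrictMonoOn Ψ (Set.Ici 0) ∧ Ψ 0 = 0

/-- The associated exponent `ψ` with `Ψ = e^ψ - 1`. -/
noncomputable def orliczExp (Ψ : ℝ → ℝ) (x : ℝ) : ℝ := Real.log (1 + Ψ x)

/-- The Orlicz (Luxemburg) norm of a Banach-space-valued random variable. -/
noncomputable def orliczNorm {Ω : Type*} [MeasurableSpace Ω] (μ : Measure Ω)
    (Ψ : ℝ → ℝ) {F : Type*} [NormedAddCommGroup F] (X : Ω → F) : ℝ :=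
  sInf {a : ℝ | 0 < a ∧ ∫⁻ ω, ENNReal.ofReal (Ψ (‖X ω‖ / a)) ∂μ ≤ 1}

/-- `X` has finite Orlicz norm. -/
def OrliczFinite {Ω : Type*} [MeasurableSpace Ω] (μ : Measure Ω)
    (Ψ : ℝ → ℝ) {F : Type*} [NormedAddCommGroup F] (X : Ω → F) : Prop :=
  ∃ a : ℝ, 0 < a ∧ ∫⁻ ω, ENNReal.ofReal (Ψ (‖X ω‖ / a)) ∂μ ≤ 1

/-- Condition (HJ): `ψ(su) ≤ K (s ln(1+s) + s ψ(u))` for all `s, u ≥ K`. -/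
def HJCond (Ψ : ℝ → ℝ) : Prop :=
  ∃ K > (0:ℝ), ∀ s u : ℝ, K ≤ s → K ≤ u →
    orliczExp Ψ (s * u) ≤ K * (s * Real.log (1 + s) + s * orliczExp Ψ u)

/-- A Rademacher (symmetric ±1) random variable. -/
def IsRademacher {Ω : Type*} [MeasurableSpace Ω] (μ : Measure Ω) (ε : Ω → ℝ) : Prop :=
  μ {ω | ε ω = 1} = 1/2 ∧ μ {ω | ε ω = -1} = 1/2

/-!
Test the Hoffmann–Jørgensen inequality on `N` i.i.d. copies of a variable that equals `±u` with
probability `p / 2` each and `0` otherwise, where `p = 1 / (N Ψ(u))`. The `L¹` norm of the sum is at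
most `N p u = u / Ψ(u) ≤ 1 / Ψ(1)`, and the maximum has Orlicz norm at most `1`, because
`E Ψ(max |X_i|) ≤ Ψ(u) P(some X_i ≠ 0) ≤ Ψ(u) N p = 1`. Hence the sum has Orlicz norm below a
constant `C` depending only on `D` and `Ψ(1)`. On the event that every `X_i = u`, of probability
`(p / 2)^N`, the sum equals `N u`, so Markov's inequality gives `Ψ(N u / C) ≤ (2 N Ψ(u))^N`.
Taking logarithms with `N = ⌈C s⌉` yields `ψ(s u) ≲ s log s + s ψ(u)`.
-/

open Set

namespace IsOrlicz

variable {Ψ : ℝ → ℝ}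

lemma monotoneOn (hΨ : IsOrlicz Ψ) : MonotoneOn Ψ (Ici 0) := hΨ.2.1.monotoneOn

lemma nonneg (hΨ : IsOrlicz Ψ) {x : ℝ} (hx : 0 ≤ x) : 0 ≤ Ψ x :=
  hΨ.2.2 ▸ hΨ.monotoneOn self_mem_Ici hx hx

lemma pos (hΨ : IsOrlicz Ψ) {x : ℝ} (hx : 0 < x) : 0 < Ψ x :=
  hΨ.2.2 ▸ hΨ.2.1 self_mem_Ici (mem_Ici.2 hx.le) hx

lemma apply_mul_le (hΨ : IsOrlicz Ψ) {t x : ℝ} (ht₀ : 0 ≤ t) (ht₁ : t ≤ 1) (hx : 0 ≤ x) :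
    Ψ (t * x) ≤ t * Ψ x := by
  have := hΨ.1.2 self_mem_Ici (mem_Ici.2 hx) (sub_nonneg.2 ht₁) ht₀ (by ring)
  simpa [hΨ.2.2] using this

lemma apply_le_mul_apply_one (hΨ : IsOrlicz Ψ) {x : ℝ} (hx₀ : 0 ≤ x) (hx₁ : x ≤ 1) :
    Ψ x ≤ x * Ψ 1 := by
  simpa using hΨ.apply_mul_le hx₀ hx₁ zero_le_one

lemma apply_one_mul_le (hΨ : IsOrlicz Ψ) {u : ℝ} (hu : 1 ≤ u) : Ψ 1 * u ≤ Ψ u := by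
  have hu₀ : 0 < u := zero_lt_one.trans_le hu
  have := hΨ.apply_mul_le (inv_nonneg.2 hu₀.le) (inv_le_one_of_one_le₀ hu) hu₀.le
  rw [inv_mul_cancel₀ hu₀.ne'] at this
  calc Ψ 1 * u ≤ u⁻¹ * Ψ u * u := by gcongr
    _ = Ψ u := by field_simp

lemma div_apply_le_inv_apply_one (hΨ : IsOrlicz Ψ) {u : ℝ} (hu : 1 ≤ u) :
    u / Ψ u ≤ (Ψ 1)⁻¹ := by
  have hΨ₁ := hΨ.pos zero_lt_one
  rw [div_le_iff₀ (hΨ.pos (zero_lt_one.trans_le hu)), inv_mul_eq_div, le_div_iff₀ hΨ₁, mul_comm]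
  exact hΨ.apply_one_mul_le hu

end IsOrlicz

section OrliczNorm

variable {Ω : Type*} [MeasurableSpace Ω] {μ : Measure Ω} {Ψ : ℝ → ℝ}
  {F : Type*} [NormedAddCommGroup F] {X : Ω → F}

lemma orliczNorm_nonneg : 0 ≤ orliczNorm μ Ψ X :=
  Real.sInf_nonneg fun _ ha => ha.1.le

lemma orliczNorm_le {a : ℝ} (ha : 0 < a)
    (h : ∫⁻ ω, ENNReal.ofReal (Ψ (‖X ω‖ / a)) ∂μ ≤ 1) : orliczNorm μ Ψ X ≤ a :=
  csInf_le ⟨0, fun _ hb => hb.1.le⟩ ⟨ha, h⟩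

lemma IsOrlicz.orliczFinite_of_norm_le [IsProbabilityMeasure μ] (hΨ : IsOrlicz Ψ) {M : ℝ}
    (hM : ∀ ω, ‖X ω‖ ≤ M) : OrliczFinite μ Ψ X := by
  have hΨ₁ := hΨ.pos zero_lt_one
  set a := (|M| + 1) * (1 + Ψ 1)
  have ha : 0 < a := by positivity
  refine ⟨a, ha, ?_⟩
  calc ∫⁻ ω, ENNReal.ofReal (Ψ (‖X ω‖ / a)) ∂μ ≤ ∫⁻ _, 1 ∂μ := by
        refine lintegral_mono fun ω => ENNReal.ofReal_le_one.2 ?_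
        have hx₀ : 0 ≤ ‖X ω‖ / a := by positivity
        have hx : ‖X ω‖ / a ≤ (1 + Ψ 1)⁻¹ := by
          rw [div_le_iff₀ ha, ← div_eq_inv_mul, mul_div_cancel_right₀ _ (by positivity)]
          linarith [hM ω, le_abs_self M]
        calc Ψ (‖X ω‖ / a) ≤ ‖X ω‖ / a * Ψ 1 :=
              hΨ.apply_le_mul_apply_one hx₀ (hx.trans (inv_le_one_of_one_le₀ (by linarith)))
          _ ≤ (1 + Ψ 1)⁻¹ * (1 + Ψ 1) := by gcongr; linarith
          _ = 1 := inv_mul_cancel₀ (by positivity)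
    _ = 1 := by simp

lemma IsOrlicz.ofReal_apply_div_mul_measure_le_one [MeasurableSpace F] [OpensMeasurableSpace F]
    (hΨ : IsOrlicz Ψ) (hX : Measurable X) (hfin : OrliczFinite μ Ψ X) {b t : ℝ}
    (hb : orliczNorm μ Ψ X < b) (ht : 0 ≤ t) :
    ENNReal.ofReal (Ψ (t / b)) * μ {ω | t ≤ ‖X ω‖} ≤ 1 := by
  obtain ⟨a, ⟨ha, hint⟩, hab⟩ := exists_lt_of_csInf_lt hfin hb
  have hb₀ : 0 < b := ha.trans hab
  have hE : MeasurableSet {ω | t ≤ ‖X ω‖} := measurableSet_le measurable_const hX.norm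
  calc ENNReal.ofReal (Ψ (t / b)) * μ {ω | t ≤ ‖X ω‖}
      ≤ ENNReal.ofReal (Ψ (t / a)) * μ {ω | t ≤ ‖X ω‖} := by
        gcongr
        exact hΨ.monotoneOn (mem_Ici.2 (by positivity)) (mem_Ici.2 (by positivity))
          (div_le_div_of_nonneg_left ht ha hab.le)
    _ = ∫⁻ ω, {ω | t ≤ ‖X ω‖}.indicator (fun _ => ENNReal.ofReal (Ψ (t / a))) ω ∂μ :=
        (lintegral_indicator_const hE _).symm
    _ ≤ ∫⁻ ω, ENNReal.ofReal (Ψ (‖X ω‖ / a)) ∂μ := by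
        refine lintegral_mono fun ω =>
          indicator_apply_le' (fun (hω : t ≤ ‖X ω‖) => ?_) fun _ => zero_le
        exact ENNReal.ofReal_le_ofReal
          (hΨ.monotoneOn (mem_Ici.2 (by positivity)) (mem_Ici.2 (by positivity)) (by gcongr))
    _ ≤ 1 := hint

end OrliczNorm

def HoffmannJorgensenIneq (Ψ : ℝ → ℝ) (D : ℝ) : Prop :=
  ∀ (Ω : Type) (_ : MeasurableSpace Ω) (μ : Measure Ω),
    IsProbabilityMeasure μ →
    ∀ (N : ℕ) (X : Fin N → Ω → ℝ),
      (∀ i, Measurable (X i)) →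
      iIndepFun X μ →
      (∀ i j, IdentDistrib (X i) (X j) μ μ) →
      (∀ i, IdentDistrib (X i) (fun ω => -(X i ω)) μ μ) →
      (∃ B : ℝ, ∀ i ω, |X i ω| ≤ B) →
      orliczNorm μ Ψ (fun ω => ∑ i, X i ω) ≤
        D * ((∫ ω, |∑ i, X i ω| ∂μ) + orliczNorm μ Ψ (fun ω => ⨆ i, |X i ω|))

lemma HoffmannJorgensenIneq.apply_pi {Ψ : ℝ → ℝ} {D : ℝ} (h : HoffmannJorgensenIneq Ψ D)
    {α : Type} [MeasurableSpace α] (ν : Measure α) [IsProbabilityMeasure ν] {f : α → ℝ}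
    (hf : Measurable f) (hsymm : IdentDistrib f (-f) ν ν) (hbdd : ∃ B, ∀ x, |f x| ≤ B)
    (N : ℕ) :
    orliczNorm (Measure.pi fun _ : Fin N => ν) Ψ (fun ω => ∑ i, f (ω i)) ≤
      D * ((∫ ω, |∑ i, f (ω i)| ∂Measure.pi fun _ : Fin N => ν) +
        orliczNorm (Measure.pi fun _ : Fin N => ν) Ψ (fun ω => ⨆ i, |f (ω i)|)) := by
  have hmap (i : Fin N) : IdentDistrib (Function.eval i) id (Measure.pi fun _ => ν) ν :=
    ⟨(measurable_pi_apply i).aemeasurable, aemeasurable_id,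
      by rw [(measurePreserving_eval _ i).map_eq, Measure.map_id]⟩
  obtain ⟨B, hB⟩ := hbdd
  exact h (Fin N → α) _ _ inferInstance N (fun i ω => f (ω i))
    (fun i => hf.comp (measurable_pi_apply i)) (iIndepFun_pi fun _ => hf.aemeasurable)
    (fun i j => ((hmap i).trans (hmap j).symm).comp hf)
    (fun i => ((hmap i).comp hf).trans (hsymm.trans ((hmap i).comp hf.neg).symm))
    ⟨B, fun i ω => hB (ω i)⟩

/-- Pushed forward by `![0, u, -u]`, this is the law of a variable that vanishes with probability
`1 - p` and equals `u` and `-u` with probability `p / 2` each. -/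
noncomputable def symmThreePoint (p : ℝ) : Measure (Fin 3) :=
  ENNReal.ofReal (1 - p) • Measure.dirac 0 +
    ENNReal.ofReal (p / 2) • (Measure.dirac 1 + Measure.dirac 2)

section SymmThreePoint

variable {p u : ℝ}

lemma isProbabilityMeasure_symmThreePoint (hp₀ : 0 ≤ p) (hp₁ : p ≤ 1) :
    IsProbabilityMeasure (symmThreePoint p) := by
  constructor
  simp only [symmThreePoint, Measure.add_apply, Measure.smul_apply, measure_univ, smul_eq_mul]
  rw [one_add_one_eq_two, ← ENNReal.ofReal_ofNat 2, mul_one, ← ENNReal.ofReal_mul (by linarith),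
    ← ENNReal.ofReal_add (by linarith) (by linarith)]
  norm_num

lemma symmThreePoint_compl_zero (hp₀ : 0 ≤ p) : symmThreePoint p {0}ᶜ = ENNReal.ofReal p := by
  have hp₂ : 0 ≤ p / 2 := by positivity
  simp [symmThreePoint, ← ENNReal.ofReal_add hp₂ hp₂]

lemma symmThreePoint_one : symmThreePoint p {1} = ENNReal.ofReal (p / 2) := by
  simp [symmThreePoint]

lemma map_swap_symmThreePoint : (symmThreePoint p).map (Equiv.swap 1 2) = symmThreePoint p := by
  have h := measurable_of_countable (Equiv.swap (1 : Fin 3) 2)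
  simp only [symmThreePoint, Measure.map_add _ _ h, Measure.map_smul, Measure.map_dirac' h]
  rw [add_comm (Measure.dirac _)]
  rfl

lemma identDistrib_neg_symmThreePoint (u : ℝ) :
    IdentDistrib ![0, u, -u] (-![0, u, -u]) (symmThreePoint p) (symmThreePoint p) := by
  have hσ : -![0, u, -u] = ![0, u, -u] ∘ Equiv.swap 1 2 := by
    ext j; fin_cases j <;> simp [Equiv.swap_apply_of_ne_of_ne]
  have hf : Measurable ![0, u, -u] := measurable_of_countable _
  have hswap : Measurable (Equiv.swap (1 : Fin 3) 2) := measurable_of_countable _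
  rw [hσ]
  refine ⟨hf.aemeasurable, (hf.comp hswap).aemeasurable, ?_⟩
  rw [← Measure.map_map hf hswap, map_swap_symmThreePoint]

lemma abs_symmThreePoint_values_eq_indicator (hu : 0 ≤ u) (j : Fin 3) :
    |![0, u, -u] j| = ({0}ᶜ : Set (Fin 3)).indicator (fun _ => u) j := by
  fin_cases j <;> simp [abs_of_nonneg hu]

lemma abs_symmThreePoint_values_le (hu : 0 ≤ u) (j : Fin 3) : |![0, u, -u] j| ≤ u := by
  rw [abs_symmThreePoint_values_eq_indicator hu]
  exact indicator_le_self' (fun _ _ => hu) j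

lemma abs_sum_symmThreePoint_values_le (hu : 0 ≤ u) {N : ℕ} (ω : Fin N → Fin 3) :
    |∑ i, ![0, u, -u] (ω i)| ≤ N * u :=
  calc |∑ i, ![0, u, -u] (ω i)| ≤ ∑ i, |![0, u, -u] (ω i)| := Finset.abs_sum_le_sum_abs _ _
    _ ≤ ∑ _ : Fin N, u := Finset.sum_le_sum fun i _ => abs_symmThreePoint_values_le hu (ω i)
    _ = N * u := by simp

lemma apply_iSup_abs_symmThreePoint_values_le_indicator {Ψ : ℝ → ℝ} (hΨ : IsOrlicz Ψ)
    (hu : 0 ≤ u) {N : ℕ} (ω : Fin N → Fin 3) :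
    ENNReal.ofReal (Ψ (⨆ i, |![0, u, -u] (ω i)|)) ≤
      (⋃ i, Function.eval i ⁻¹' ({0}ᶜ : Set (Fin 3))).indicator
        (fun _ => ENNReal.ofReal (Ψ u)) ω := by
  have hsup₀ : 0 ≤ ⨆ i, |![0, u, -u] (ω i)| := Real.iSup_nonneg fun _ => abs_nonneg _
  by_cases hω : ω ∈ ⋃ i, Function.eval i ⁻¹' ({0}ᶜ : Set (Fin 3))
  · rw [indicator_of_mem hω]
    exact ENNReal.ofReal_le_ofReal (hΨ.monotoneOn hsup₀ hu
      (Real.iSup_le (fun i => abs_symmThreePoint_values_le hu _) hu))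
  · simp only [mem_iUnion, mem_preimage, mem_compl_iff, mem_singleton_iff, not_exists,
      not_not] at hω
    have hzero : ⨆ i, |![0, u, -u] (ω i)| = 0 :=
      le_antisymm (Real.iSup_le (fun i => by simp [hω i]) le_rfl) hsup₀
    simp [hzero, hΨ.2.2]

variable (N : ℕ)

lemma pi_symmThreePoint_eval_preimage_compl_zero (hp₀ : 0 ≤ p) (hp₁ : p ≤ 1) (i : Fin N) :
    Measure.pi (fun _ : Fin N => symmThreePoint p) (Function.eval i ⁻¹' {0}ᶜ) =
      ENNReal.ofReal p := by
  have := isProbabilityMeasure_symmThreePoint hp₀ hp₁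
  rw [(measurePreserving_eval _ i).measure_preimage MeasurableSet.of_discrete.nullMeasurableSet,
    symmThreePoint_compl_zero hp₀]

lemma integral_abs_sum_symmThreePoint_le (hp₀ : 0 ≤ p) (hp₁ : p ≤ 1) (hu : 0 ≤ u) :
    ∫ ω, |∑ i, ![0, u, -u] (ω i)| ∂Measure.pi (fun _ : Fin N => symmThreePoint p) ≤
      N * (p * u) := by
  have := isProbabilityMeasure_symmThreePoint hp₀ hp₁
  have hf : Measurable ![0, u, -u] := measurable_of_countable _
  calc ∫ ω, |∑ i, ![0, u, -u] (ω i)| ∂Measure.pi (fun _ : Fin N => symmThreePoint p)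
      ≤ ∫ ω, ∑ i, |![0, u, -u] (ω i)| ∂Measure.pi (fun _ : Fin N => symmThreePoint p) :=
        integral_mono .of_finite .of_finite fun ω => Finset.abs_sum_le_sum_abs _ _
    _ = ∑ i, ∫ ω, |![0, u, -u] (ω i)| ∂Measure.pi (fun _ : Fin N => symmThreePoint p) :=
        integral_finsetSum _ fun i _ => .of_finite
    _ = ∑ _ : Fin N, p * u := by
        refine Finset.sum_congr rfl fun i _ => ?_
        rw [integral_comp_eval (μ := fun _ : Fin N => symmThreePoint p) (i := i)
          hf.abs.aestronglyMeasurable]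
        simp_rw [abs_symmThreePoint_values_eq_indicator hu]
        rw [integral_indicator_const _ MeasurableSet.of_discrete, measureReal_def,
          symmThreePoint_compl_zero hp₀, ENNReal.toReal_ofReal hp₀, smul_eq_mul]
    _ = N * (p * u) := by simp

lemma orliczNorm_iSup_symmThreePoint_le_one {Ψ : ℝ → ℝ} (hΨ : IsOrlicz Ψ) (hp₀ : 0 ≤ p)
    (hp₁ : p ≤ 1) (hu : 0 ≤ u) (h : N * p * Ψ u ≤ 1) :
    orliczNorm (Measure.pi fun _ : Fin N => symmThreePoint p) Ψ
      (fun ω => ⨆ i, |![0, u, -u] (ω i)|) ≤ 1 := by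
  set μ := Measure.pi fun _ : Fin N => symmThreePoint p
  refine orliczNorm_le zero_lt_one ?_
  calc ∫⁻ ω, ENNReal.ofReal (Ψ (‖⨆ i, |![0, u, -u] (ω i)|‖ / 1)) ∂μ
      ≤ ∫⁻ ω, (⋃ i, Function.eval i ⁻¹' ({0}ᶜ : Set (Fin 3))).indicator
          (fun _ => ENNReal.ofReal (Ψ u)) ω ∂μ := by
        refine lintegral_mono fun ω => ?_
        rw [div_one, Real.norm_of_nonneg (Real.iSup_nonneg fun _ => abs_nonneg _)]
        exact apply_iSup_abs_symmThreePoint_values_le_indicator hΨ hu ω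
    _ = ENNReal.ofReal (Ψ u) * μ (⋃ i, Function.eval i ⁻¹' ({0}ᶜ : Set (Fin 3))) :=
        lintegral_indicator_const MeasurableSet.of_discrete _
    _ ≤ ENNReal.ofReal (Ψ u) * ∑ i : Fin N, μ (Function.eval i ⁻¹' ({0}ᶜ : Set (Fin 3))) := by
        gcongr; exact measure_iUnion_fintype_le _ _
    _ = ENNReal.ofReal (N * p * Ψ u) := by
        simp only [μ, pi_symmThreePoint_eval_preimage_compl_zero N hp₀ hp₁, Finset.sum_const,
          Finset.card_univ, Fintype.card_fin, nsmul_eq_mul]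
        rw [← ENNReal.ofReal_natCast, ← ENNReal.ofReal_mul (by positivity),
          ← ENNReal.ofReal_mul (hΨ.nonneg hu), mul_comm]
    _ ≤ 1 := ENNReal.ofReal_le_one.2 h

lemma pow_le_pi_symmThreePoint_norm_sum_ge (hp₀ : 0 ≤ p) (hp₁ : p ≤ 1) (hu : 0 ≤ u) :
    ENNReal.ofReal (p / 2) ^ N ≤ Measure.pi (fun _ : Fin N => symmThreePoint p)
      {ω | N * u ≤ ‖∑ i, ![0, u, -u] (ω i)‖} := by
  have := isProbabilityMeasure_symmThreePoint hp₀ hp₁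
  calc ENNReal.ofReal (p / 2) ^ N
      = Measure.pi (fun _ : Fin N => symmThreePoint p) (univ.pi fun _ => {1}) := by
        simp [Measure.pi_pi, symmThreePoint_one]
    _ ≤ _ := measure_mono fun ω hω => by
        simp only [mem_univ_pi, mem_singleton_iff] at hω
        simp [hω, abs_of_nonneg hu]

end SymmThreePoint

lemma HoffmannJorgensenIneq.orliczNorm_sum_symmThreePoint_le {Ψ : ℝ → ℝ} {D : ℝ}
    (h : HoffmannJorgensenIneq Ψ D) (hΨ : IsOrlicz Ψ) {p u : ℝ} (N : ℕ) (hp₀ : 0 ≤ p)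
    (hp₁ : p ≤ 1) (hu : 0 ≤ u) (hNp : N * p * Ψ u ≤ 1) :
    orliczNorm (Measure.pi fun _ : Fin N => symmThreePoint p) Ψ
      (fun ω => ∑ i, ![0, u, -u] (ω i)) ≤ |D| * (N * (p * u) + 1) := by
  have := isProbabilityMeasure_symmThreePoint hp₀ hp₁
  set μ := Measure.pi fun _ : Fin N => symmThreePoint p
  calc orliczNorm μ Ψ (fun ω => ∑ i, ![0, u, -u] (ω i))
      ≤ D * ((∫ ω, |∑ i, ![0, u, -u] (ω i)| ∂μ) +
        orliczNorm μ Ψ (fun ω => ⨆ i, |![0, u, -u] (ω i)|)) :=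
        h.apply_pi _ (measurable_of_countable _) (identDistrib_neg_symmThreePoint u)
          ⟨u, abs_symmThreePoint_values_le hu⟩ N
    _ ≤ |D| * ((∫ ω, |∑ i, ![0, u, -u] (ω i)| ∂μ) +
        orliczNorm μ Ψ (fun ω => ⨆ i, |![0, u, -u] (ω i)|)) :=
        mul_le_mul_of_nonneg_right (le_abs_self D)
          (add_nonneg (integral_nonneg fun _ => abs_nonneg _) orliczNorm_nonneg)
    _ ≤ |D| * (N * (p * u) + 1) := by
        gcongr
        · exact integral_abs_sum_symmThreePoint_le N hp₀ hp₁ hu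
        · exact orliczNorm_iSup_symmThreePoint_le_one N hΨ hp₀ hp₁ hu hNp

lemma HoffmannJorgensenIneq.apply_mul_div_le_pow {Ψ : ℝ → ℝ} {D : ℝ}
    (h : HoffmannJorgensenIneq Ψ D) (hΨ : IsOrlicz Ψ) {N : ℕ} {u b : ℝ} (hu : 0 < u)
    (hN : 1 ≤ N * Ψ u) (hb : |D| * (u / Ψ u + 1) < b) :
    Ψ (N * u / b) ≤ (2 * N * Ψ u) ^ N := by
  have hΨu : 0 < Ψ u := hΨ.pos hu
  have hb₀ : 0 < b := lt_of_le_of_lt (by positivity) hb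
  have hN₀ : (N : ℝ) ≠ 0 := left_ne_zero_of_mul (zero_lt_one.trans_le hN).ne'
  set p := (N * Ψ u)⁻¹
  have hp₀ : 0 ≤ p := by positivity
  have hp₁ : p ≤ 1 := inv_le_one_of_one_le₀ hN
  have hNp : N * p * Ψ u = 1 := by simp only [p]; field_simp
  have hNpu : N * (p * u) = u / Ψ u := by simp only [p]; field_simp
  have := isProbabilityMeasure_symmThreePoint hp₀ hp₁
  have hnorm : orliczNorm (Measure.pi fun _ : Fin N => symmThreePoint p) Ψ
      (fun ω => ∑ i, ![0, u, -u] (ω i)) < b :=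
    (h.orliczNorm_sum_symmThreePoint_le hΨ N hp₀ hp₁ hu.le hNp.le).trans_lt (hNpu ▸ hb)
  have hmarkov := hΨ.ofReal_apply_div_mul_measure_le_one (measurable_of_countable _)
    (hΨ.orliczFinite_of_norm_le (abs_sum_symmThreePoint_values_le hu.le)) hnorm
    (by positivity : (0 : ℝ) ≤ N * u)
  have hprod : Ψ (N * u / b) * (p / 2) ^ N ≤ 1 := by
    rw [← ENNReal.ofReal_le_one, ENNReal.ofReal_mul (hΨ.nonneg (by positivity)),
      ENNReal.ofReal_pow (by positivity)]
    refine le_trans ?_ hmarkov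
    gcongr
    exact pow_le_pi_symmThreePoint_norm_sum_ge N hp₀ hp₁ hu.le
  calc Ψ (N * u / b) ≤ 1 / (p / 2) ^ N := (le_div_iff₀ (by positivity)).2 hprod
    _ = (2 * N * Ψ u) ^ N := by rw [one_div, ← inv_pow, inv_div, div_inv_eq_mul, mul_assoc]

lemma orliczExp_le_of_apply_le_pow {Ψ : ℝ → ℝ} {x y : ℝ} {N : ℕ} (hx : 0 ≤ Ψ x)
    (hy : 0 < Ψ y) (hN : 1 ≤ 2 * N * Ψ y) (h : Ψ x ≤ (2 * N * Ψ y) ^ N) :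
    orliczExp Ψ x ≤ Real.log 2 + N * (Real.log (2 * N) + orliczExp Ψ y) := by
  have hN₀ : (0 : ℝ) < 2 * N := pos_of_mul_pos_left (zero_lt_one.trans_le hN) hy.le
  have hlog : Real.log (Ψ y) ≤ orliczExp Ψ y := Real.log_le_log hy (by linarith)
  calc orliczExp Ψ x ≤ Real.log (2 * (2 * N * Ψ y) ^ N) :=
        Real.log_le_log (by linarith) (by linarith [one_le_pow₀ (n := N) hN])
    _ = Real.log 2 + N * (Real.log (2 * N) + Real.log (Ψ y)) := by
        rw [Real.log_mul two_ne_zero (by positivity), Real.log_pow,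
          Real.log_mul hN₀.ne' hy.ne']
    _ ≤ Real.log 2 + N * (Real.log (2 * N) + orliczExp Ψ y) := by gcongr

lemma log_two_add_ceil_mul_le {C s E : ℝ} (hC : 0 < C) (hs : 2 ≤ s) (hE : 0 ≤ E) :
    Real.log 2 + ⌈C * s⌉₊ * (Real.log (2 * ⌈C * s⌉₊) + E) ≤
      (1 + (C + 1) * (Real.log (2 * (C + 1)) + 1)) * (s * Real.log (1 + s)) +
        (C + 1) * (s * E) := by
  set N := ⌈C * s⌉₊
  set A := Real.log (2 * (C + 1))
  set L := Real.log (1 + s)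
  have hA : 0 ≤ A := Real.log_nonneg (by linarith)
  have hN₁ : (1 : ℝ) ≤ N := by exact_mod_cast Nat.one_le_ceil_iff.2 (by positivity)
  have hNs : (N : ℝ) ≤ (C + 1) * s := by
    linarith [Nat.ceil_lt_add_one (by positivity : 0 ≤ C * s)]
  have hL : 1 ≤ L := by
    rw [Real.le_log_iff_exp_le (by linarith)]
    linarith [Real.exp_one_lt_d9]
  have hlog2 : Real.log 2 ≤ s * L := by nlinarith [Real.log_two_lt_d9]
  have hlogN : Real.log (2 * N) ≤ (A + 1) * L :=
    calc Real.log (2 * N) ≤ Real.log (2 * (C + 1) * s) :=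
          Real.log_le_log (by positivity) (by linarith)
      _ = A + Real.log s := Real.log_mul (by positivity) (by positivity)
      _ ≤ A + L := by gcongr; exact Real.log_le_log (by positivity) (by linarith)
      _ ≤ (A + 1) * L := by nlinarith
  have hlogN₀ : 0 ≤ Real.log (2 * N) := Real.log_nonneg (by linarith)
  calc Real.log 2 + N * (Real.log (2 * N) + E)
      ≤ s * L + ((C + 1) * s) * ((A + 1) * L + E) := by gcongr
    _ = (1 + (C + 1) * (A + 1)) * (s * L) + (C + 1) * (s * E) := by ring

lemma IsOrlicz.hjCond_of_apply_mul_div_le_pow {Ψ : ℝ → ℝ} (hΨ : IsOrlicz Ψ) {C : ℝ}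
    (hC : 0 < C)
    (h : ∀ (N : ℕ) (u : ℝ), 1 ≤ u → 1 ≤ N * Ψ u → Ψ (N * u / C) ≤ (2 * N * Ψ u) ^ N) :
    HJCond Ψ := by
  set K := max (max 2 (Ψ 1)⁻¹) (1 + (C + 1) * (Real.log (2 * (C + 1)) + 1))
  have hK₂ : 2 ≤ K := le_max_of_le_left (le_max_left _ _)
  have hKΨ : (Ψ 1)⁻¹ ≤ K := le_max_of_le_left (le_max_right _ _)
  have hKA : 1 + (C + 1) * (Real.log (2 * (C + 1)) + 1) ≤ K := le_max_right _ _
  refine ⟨K, by positivity, fun s u hs hu => ?_⟩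
  have hs₂ : 2 ≤ s := hK₂.trans hs
  have hu₁ : 1 ≤ u := by linarith [hK₂.trans hu]
  have hΨu : 1 ≤ Ψ u :=
    calc 1 = Ψ 1 * (Ψ 1)⁻¹ := (mul_inv_cancel₀ (hΨ.pos zero_lt_one).ne').symm
      _ ≤ Ψ 1 * u := by gcongr; exacts [(hΨ.pos zero_lt_one).le, hKΨ.trans hu]
      _ ≤ Ψ u := hΨ.apply_one_mul_le hu₁
  set N := ⌈C * s⌉₊
  have hN₁ : (1 : ℝ) ≤ N := by exact_mod_cast Nat.one_le_ceil_iff.2 (by positivity)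
  have hsu : s * u ≤ N * u / C := by
    rw [le_div_iff₀ hC]; nlinarith [Nat.le_ceil (C * s)]
  have hE : 0 ≤ orliczExp Ψ u := Real.log_nonneg (by linarith)
  calc orliczExp Ψ (s * u)
      ≤ Real.log 2 + N * (Real.log (2 * N) + orliczExp Ψ u) :=
        orliczExp_le_of_apply_le_pow (hΨ.nonneg (by positivity)) (by linarith) (by nlinarith)
          ((hΨ.monotoneOn (mem_Ici.2 (by positivity)) (mem_Ici.2 (by positivity)) hsu).trans
            (h N u hu₁ (by nlinarith)))
    _ ≤ (1 + (C + 1) * (Real.log (2 * (C + 1)) + 1)) * (s * Real.log (1 + s)) +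
          (C + 1) * (s * orliczExp Ψ u) := log_two_add_ceil_mul_le hC hs₂ hE
    _ ≤ K * (s * Real.log (1 + s) + s * orliczExp Ψ u) := by
        have hsL : 0 ≤ s * Real.log (1 + s) :=
          mul_nonneg (by linarith) (Real.log_nonneg (by linarith))
        have hCK : C + 1 ≤ K := by
          nlinarith [Real.log_nonneg (by linarith : (1 : ℝ) ≤ 2 * (C + 1))]
        nlinarith [mul_le_mul_of_nonneg_right hKA hsL,
          mul_le_mul_of_nonneg_right hCK (by positivity : 0 ≤ s * orliczExp Ψ u)]

/-- Necessity: if the Hoffmann–Jørgensen inequality holds (with constant `D`) for all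
i.i.d., symmetric, bounded real random variables, then `Ψ` satisfies (HJ). -/
theorem stmt14 {Ψ : ℝ → ℝ} (hΨ : IsOrlicz Ψ) (D : ℝ)
    (hHJineq : ∀ (Ω : Type) (_ : MeasurableSpace Ω) (μ : Measure Ω),
      IsProbabilityMeasure μ →
      ∀ (N : ℕ) (X : Fin N → Ω → ℝ),
        (∀ i, Measurable (X i)) →
        iIndepFun X μ →
        (∀ i j, IdentDistrib (X i) (X j) μ μ) →
        (∀ i, IdentDistrib (X i) (fun ω => -(X i ω)) μ μ) →
        (∃ B : ℝ, ∀ i ω, |X i ω| ≤ B) →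
        orliczNorm μ Ψ (fun ω => ∑ i, X i ω) ≤
          D * ((∫ ω, |∑ i, X i ω| ∂μ) + orliczNorm μ Ψ (fun ω => ⨆ i, |X i ω|))) :
    HJCond Ψ := by
  have hΨ₁ := hΨ.pos zero_lt_one
  refine hΨ.hjCond_of_apply_mul_div_le_pow (C := |D| * ((Ψ 1)⁻¹ + 1) + 1) (by positivity)
    fun N u hu hN =>
      HoffmannJorgensenIneq.apply_mul_div_le_pow hHJineq hΨ (by linarith) hN ?_
  calc |D| * (u / Ψ u + 1) ≤ |D| * ((Ψ 1)⁻¹ + 1) := by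
        gcongr; exact hΨ.div_apply_le_inv_apply_one hu
    _ < |D| * ((Ψ 1)⁻¹ + 1) + 1 := lt_add_one _
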